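/- Let β be a countable ordinal and let p₀ ∈ P_β be the finite β-tagged tree ({⟨⟩}, h) where h(⟨⟩) = ∞. Then for every β' < β, the set R_β \ R_{β'} is open and dense in N^β_{p₀} with respect to the β-topology; consequently p₀ ⊩_β (R_β \ ⋃_{β' < β} R_{β'}). -/

import Mathlib

open Cardinal Ordinal Topology

/-- A tree on `ω`: a set of finite sequences (coded by its characteristic function)
closed under initial segments. -/
def IsTreeFun (T : List ℕ → Bool) : Prop :=
  ∀ s t : List ℕ, t <+: s → T s = true → T t = true

/-- The space `𝒯` of trees on `ω`, as a (closed) subspace of the Cantor-like space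
of subsets of `Seq = List ℕ`. -/
abbrev TreeSpace : Type := {T : List ℕ → Bool // IsTreeFun T}

/-- `childRel T t s` : `t` is an immediate successor of `s` lying in `T`. -/
def childRel (T : List ℕ → Bool) (t s : List ℕ) : Prop :=
  T t = true ∧ ∃ n : ℕ, t = s ++ [n]

/-- The rank function `rk_T : Seq → ω₁ ∪ {∞}` (with `∞ = ⊤`): if `T` is well-founded below
`s`, the least ordinal greater than the ranks of all immediate successors of `s` in `T`;
otherwise `∞`. -/
noncomputable def treeRank (T : TreeSpace) (s : List ℕ) : WithTop Ordinal.{0} :=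
  @dite _ (Acc (childRel T.1) s) (Classical.dec _)
    (fun h => ((h.rank : Ordinal.{0}) : WithTop Ordinal.{0})) (fun _ => ⊤)

/-- `𝒯'`: trees containing the empty sequence such that for each `s`, either all immediate
successors of `s` are in the tree, or none are. -/
def GTreeSet : Set TreeSpace :=
  {T | T.1 [] = true ∧ ∀ (s : List ℕ) (n m : ℕ), T.1 (s ++ [n]) = T.1 (s ++ [m])}

/-- `R_β`: trees in `𝒯'` all of whose nodes have rank `∞` or an ordinal `< β`. -/
def Rset (β : Ordinal.{0}) : Set TreeSpace :=
  {T | T ∈ GTreeSet ∧ ∀ s : List ℕ, T.1 s = true →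
    treeRank T s = ⊤ ∨ treeRank T s < (β : WithTop Ordinal.{0})}

/-- Tagged trees, coded as the graph of the tagging function: a set of pairs
`(s, H s) ∈ Seq × (ω₁ ∪ {∞})`. -/
abbrev Tagged : Type 1 := Set (List ℕ × WithTop Ordinal.{0})

/-- The domain (underlying tree) of a tagged tree. -/
def Tagged.dom (p : Tagged) : Set (List ℕ) := Prod.fst '' p

/-- `(T,H)` is a tagged tree: `H` is a function, `T` is a tree, and `H(s') > H(s)` whenever
`s'` is a proper initial segment of `s` in `T` (where `∞ > ∞`). -/
def IsTagged (p : Tagged) : Prop :=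
  (∀ s h h', (s, h) ∈ p → (s, h') ∈ p → h = h') ∧
  (∀ s t : List ℕ, t <+: s → s ∈ p.dom → t ∈ p.dom) ∧
  (∀ s h t h', (s, h) ∈ p → (t, h') ∈ p → t <+: s → t ≠ s → (h' = ⊤ ∨ h < h'))

/-- `P_β`: the finite `β`-tagged trees (all tags in `β ∪ {∞}`). -/
def Pfin (β : Ordinal.{0}) : Set Tagged :=
  {p | p.Finite ∧ IsTagged p ∧ ∀ x ∈ p, x.2 = ⊤ ∨ x.2 < (β : WithTop Ordinal.{0})}

/-- `N^β_p = {T ∈ R_β : p ⊆ (T, rk_T)}`. -/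
def Nset (β : Ordinal.{0}) (p : Tagged) : Set TreeSpace :=
  {T | T ∈ Rset β ∧ ∀ x ∈ p, T.1 x.1 = true ∧ treeRank T x.1 = x.2}

/-- The `β`-topology on `R_β`, generated by the basic sets `N^β_p` for `p ∈ P_β`. -/
noncomputable def betaTop (β : Ordinal.{0}) : TopologicalSpace ↥(Rset β) :=
  TopologicalSpace.generateFrom
    {U : Set ↥(Rset β) | ∃ p ∈ Pfin β, U = {T : ↥(Rset β) | (T : TreeSpace) ∈ Nset β p}}

/-- `p ⊩_β A`: `A ∩ N^β_p` is comeager in `N^β_p` with respect to the `β`-topology. -/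
def Forces (β : Ordinal.{0}) (p : Tagged) (A : Set TreeSpace) : Prop :=
  {x : ↥{T : ↥(Rset β) | (T : TreeSpace) ∈ Nset β p} |
      ((x : ↥(Rset β)) : TreeSpace) ∈ A} ∈
    @residual ↥{T : ↥(Rset β) | (T : TreeSpace) ∈ Nset β p}
      (TopologicalSpace.induced Subtype.val (betaTop β))

/-- `p ~_α q` for finite tagged trees: same underlying tree, and tags agree whenever
either tag is an ordinal less than `α`. -/
def TagSim (α : Ordinal.{0}) (p q : Tagged) : Prop :=
  p.dom = q.dom ∧ ∀ s h h', (s, h) ∈ p → (s, h') ∈ q →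
    (h < (α : WithTop Ordinal.{0}) ∨ h' < (α : WithTop Ordinal.{0})) → h = h'

/-- The tagged tree `({⟨⟩}, h)` with `h(⟨⟩) = ∞`. -/
def pZero : Tagged := {(([] : List ℕ), (⊤ : WithTop Ordinal.{0}))}

open scoped Classical

/-! ### Generic accessibility helpers -/

theorem no_chain {α : Type*} {r : α → α → Prop} {a : α} (h : Acc r a) :
    ∀ f : ℕ → α, f 0 = a → (∀ k, r (f (k + 1)) (f k)) → False := by
  induction h with
  | intro x _ ih =>
    intro f h0 hc
    exact ih (f 1) (h0 ▸ hc 0) (fun k => f (k + 1)) rfl (fun k => hc (k + 1))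

theorem chain_step {α : Type*} {r : α → α → Prop} {a : α} (h : ¬ Acc r a) :
    ∃ b, r b a ∧ ¬ Acc r b := by
  by_contra hb
  push_neg at hb
  exact h (Acc.intro a fun b hb' => hb b hb')

/-! ### childRel basics -/

theorem childRel_mem {U : List ℕ → Bool} {t s : List ℕ} (h : childRel U t s) : U t = true := h.1

theorem prefix_snoc_iff {t s : List ℕ} {n : ℕ} :
    t <+: s ++ [n] ↔ t <+: s ∨ t = s ++ [n] := by
  constructor
  · intro h
    rcases Nat.lt_or_ge t.length (s ++ [n]).length with hl | hl
    · left
      refine List.prefix_of_prefix_length_le h (List.prefix_append s [n]) ?_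
      simpa using Nat.lt_succ_iff.mp (by simpa using hl)
    · right
      exact h.eq_of_length (le_antisymm h.length_le (by simpa using hl))
  · rintro (h | rfl)
    · exact h.trans (List.prefix_append s [n])
    · exact List.prefix_refl _

theorem rank_congr_pt {α : Type*} {r : α → α → Prop} {a b : α} (h : a = b)
    (ha : Acc r a) (hb : Acc r b) : ha.rank = hb.rank := by
  subst h; exact congrArg Acc.rank (Subsingleton.elim ha hb)

theorem acc_of_prefix {U : List ℕ → Bool} (hU : IsTreeFun U) :
    ∀ (l : List ℕ) (t : List ℕ), U (t ++ l) = true →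
      Acc (childRel U) t → Acc (childRel U) (t ++ l) := by
  intro l
  induction l with
  | nil => intro t h ha; simpa using ha
  | cons a l ih =>
    intro t hs ha
    have h1 : U (t ++ [a]) = true := by
      refine hU (t ++ (a :: l)) (t ++ [a]) ⟨l, by simp⟩ hs
    have hacc1 : Acc (childRel U) (t ++ [a]) := ha.inv ⟨h1, a, rfl⟩
    have := ih (t ++ [a]) (by simpa using hs) hacc1
    simpa using this

theorem rank_lt_of_proper_prefix {U : List ℕ → Bool} (hU : IsTreeFun U) :
    ∀ (l : List ℕ) (t : List ℕ), l ≠ [] → U (t ++ l) = true →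
      ∀ (hat : Acc (childRel U) t) (has : Acc (childRel U) (t ++ l)),
      has.rank < hat.rank := by
  intro l
  induction l with
  | nil => intro t h; exact absurd rfl h
  | cons a l ih =>
    intro t _ hs hat has
    have h1 : U (t ++ [a]) = true :=
      hU (t ++ (a :: l)) (t ++ [a]) ⟨l, by simp⟩ hs
    have hch : childRel U (t ++ [a]) t := ⟨h1, a, rfl⟩
    have hacc1 : Acc (childRel U) (t ++ [a]) := hat.inv hch
    have hlt1 : hacc1.rank < hat.rank := by
      have := Acc.rank_lt_of_rel hat hch
      simpa [Subsingleton.elim (hat.inv hch) hacc1] using this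
    rcases eq_or_ne l [] with rfl | hl
    · have heq : has.rank = hacc1.rank := rank_congr_pt rfl has hacc1
      simpa [heq] using hlt1
    · have has' : Acc (childRel U) ((t ++ [a]) ++ l) := by simpa using has
      have := ih (t ++ [a]) hl (by simpa using hs) hacc1 has'
      have heq : has.rank = has'.rank := rank_congr_pt (by simp) has has'
      exact lt_trans (heq ▸ this) hlt1

/-! ### treeRank basics -/

theorem treeRank_eq_top {T : TreeSpace} {s : List ℕ} (h : ¬ Acc (childRel T.1) s) :
    treeRank T s = ⊤ := dif_neg h

theorem treeRank_eq_rank {T : TreeSpace} {s : List ℕ} (h : Acc (childRel T.1) s) :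
    treeRank T s = (h.rank : WithTop Ordinal.{0}) := by
  rw [treeRank, dif_pos h]

theorem treeRank_eq_top_iff {T : TreeSpace} {s : List ℕ} :
    treeRank T s = ⊤ ↔ ¬ Acc (childRel T.1) s := by
  constructor
  · intro h hacc
    rw [treeRank_eq_rank hacc] at h
    exact WithTop.coe_ne_top h
  · exact treeRank_eq_top
/-! ### Agreement lemmas: rank depends only on the cone above a node -/

theorem acc_congr {U V : List ℕ → Bool} :
    ∀ {t : List ℕ}, Acc (childRel U) t → (∀ u, t <+: u → U u = V u) →
      Acc (childRel V) t := by
  intro t h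
  induction h with
  | intro x _ ih =>
    intro hag
    refine Acc.intro x fun y hy => ?_
    obtain ⟨hyV, n, rfl⟩ := hy
    have hpre : x <+: x ++ [n] := ⟨[n], rfl⟩
    have hyU : U (x ++ [n]) = true := by rw [hag _ hpre]; exact hyV
    exact ih _ ⟨hyU, n, rfl⟩ fun u hu => hag u (hpre.trans hu)

theorem rank_congr {U V : List ℕ → Bool} :
    ∀ {t : List ℕ} (hU : Acc (childRel U) t), (∀ u, t <+: u → U u = V u) →
      ∀ (hV : Acc (childRel V) t), hU.rank = hV.rank := by
  intro t h
  induction h with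
  | intro x hx ih =>
    intro hag hV
    have hUx : Acc (childRel U) x := Acc.intro x hx
    have hcr : ∀ y, childRel U y x ↔ childRel V y x := by
      intro y
      constructor
      · rintro ⟨hy, n, rfl⟩
        exact ⟨by rw [← hag (x ++ [n]) ⟨[n], rfl⟩]; exact hy, n, rfl⟩
      · rintro ⟨hy, n, rfl⟩
        exact ⟨by rw [hag (x ++ [n]) ⟨[n], rfl⟩]; exact hy, n, rfl⟩
    rw [Acc.rank_eq, Acc.rank_eq]
    apply le_antisymm
    · refine Ordinal.iSup_le fun b => ?_
      obtain ⟨y, hy⟩ := b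
      have hyV : childRel V y x := (hcr y).1 hy
      have hr : (hUx.inv hy).rank = (hV.inv hyV).rank := by
        refine ih y hy (fun u hu => hag u ?_) (hV.inv hyV)
        obtain ⟨_, n, rfl⟩ := hy
        exact List.IsPrefix.trans ⟨[n], rfl⟩ hu
      have := Ordinal.le_iSup (fun b : {b // childRel V b x} =>
        Order.succ (hV.inv b.2).rank) ⟨y, hyV⟩
      calc Order.succ (hUx.inv hy).rank = Order.succ (hV.inv hyV).rank := by rw [hr]
        _ ≤ _ := this
    · refine Ordinal.iSup_le fun b => ?_
      obtain ⟨y, hy⟩ := b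
      have hyU : childRel U y x := (hcr y).2 hy
      have hr : (hUx.inv hyU).rank = (hV.inv hy).rank := by
        refine ih y hyU (fun u hu => hag u ?_) (hV.inv hy)
        obtain ⟨_, n, rfl⟩ := hyU
        exact List.IsPrefix.trans ⟨[n], rfl⟩ hu
      have := Ordinal.le_iSup (fun b : {b // childRel U b x} =>
        Order.succ (hUx.inv b.2).rank) ⟨y, hyU⟩
      calc Order.succ (hV.inv hy).rank = Order.succ (hUx.inv hyU).rank := by rw [hr]
        _ ≤ _ := this

/-! ### Countability of ordinals below `ω₁` -/

theorem countable_Iio_of_lt_omega1 {β : Ordinal.{0}} (h : β < ω₁) :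
    (Set.Iio β).Countable := by
  rw [Cardinal.countable_iff_lt_aleph_one, Ordinal.mk_Iio_ordinal,
    Cardinal.lift_lt_aleph_one]
  rwa [← Cardinal.ord_aleph, Cardinal.lt_ord] at h

/-! ### The canonical full tree of a given countable rank -/

/-- A choice of a sequence of ordinals below `α`, surjective onto `Iio α`
whenever that is possible. -/
noncomputable def chf (α : Ordinal.{0}) : ℕ → Ordinal.{0} :=
  if h : ∃ f : ℕ → Ordinal.{0}, (∀ n, f n < α) ∧ ∀ γ < α, ∃ n, f n = γ
  then h.choose else fun _ => 0

theorem chf_lt {α : Ordinal.{0}} (h0 : 0 < α) (n : ℕ) : chf α n < α := by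
  rw [chf]
  split
  · next h => exact h.choose_spec.1 n
  · exact h0

theorem chf_le (α : Ordinal.{0}) (n : ℕ) : chf α n ≤ α := by
  rcases eq_or_ne α 0 with rfl | h
  · rw [chf]
    split
    · next h => exact (h.choose_spec.1 n).le
    · exact le_rfl
  · exact (chf_lt (pos_iff_ne_zero.2 h) n).le

theorem chf_surj {α : Ordinal.{0}} (h0 : 0 < α) (hc : α < ω₁) :
    ∀ γ < α, ∃ n, chf α n = γ := by
  have hex : ∃ f : ℕ → Ordinal.{0}, (∀ n, f n < α) ∧ ∀ γ < α, ∃ n, f n = γ := by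
    obtain ⟨f, hf⟩ := (countable_Iio_of_lt_omega1 hc).exists_surjective
      ⟨0, Set.mem_Iio.mpr h0⟩
    refine ⟨fun n => (f n).1, fun n => Set.mem_Iio.mp (f n).2, fun γ hγ => ?_⟩
    obtain ⟨n, hn⟩ := hf ⟨γ, Set.mem_Iio.mpr hγ⟩
    exact ⟨n, congrArg Subtype.val hn⟩
  rw [chf, dif_pos hex]
  exact hex.choose_spec.2

/-- Membership function of the canonical tree: `gfun s α = true` iff the node `s`
belongs to the canonical full tree of rank `α`. -/
noncomputable def gfun : List ℕ → Ordinal.{0} → Bool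
  | [], _ => true
  | n :: t, α => if α = 0 then false else gfun t (chf α n)

/-- The ordinal value attached to a node of the canonical tree. -/
noncomputable def vfun : List ℕ → Ordinal.{0} → Ordinal.{0}
  | [], α => α
  | n :: t, α => vfun t (chf α n)

theorem vfun_le : ∀ (t : List ℕ) (α : Ordinal.{0}), vfun t α ≤ α := by
  intro t
  induction t with
  | nil => intro α; exact le_rfl
  | cons n t ih => intro α; exact (ih (chf α n)).trans (chf_le α n)

theorem gfun_prefix : ∀ (t s : List ℕ) (α : Ordinal.{0}), t <+: s →
    gfun s α = true → gfun t α = true := by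
  intro t
  induction t with
  | nil => intro s α _ _; rfl
  | cons a t ih =>
    intro s α hp hs
    obtain ⟨l, rfl⟩ := hp
    rw [List.cons_append] at hs
    rw [gfun] at hs ⊢
    rcases eq_or_ne α 0 with rfl | h
    · simp at hs
    · rw [if_neg h] at hs ⊢
      exact ih _ _ ⟨l, rfl⟩ hs

theorem vfun_snoc : ∀ (s : List ℕ) (n : ℕ) (α : Ordinal.{0}),
    vfun (s ++ [n]) α = chf (vfun s α) n := by
  intro s
  induction s with
  | nil => intro n α; rfl
  | cons a s ih => intro n α; rw [List.cons_append, vfun, vfun, ih]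

theorem gfun_snoc : ∀ (s : List ℕ) (n : ℕ) (α : Ordinal.{0}),
    (gfun (s ++ [n]) α = true ↔ gfun s α = true ∧ vfun s α ≠ 0) := by
  intro s
  induction s with
  | nil =>
    intro n α
    rcases eq_or_ne α 0 with rfl | h
    · simp [gfun, vfun]
    · simp [gfun, vfun, h]
  | cons a s ih =>
    intro n α
    rcases eq_or_ne α 0 with rfl | h
    · simp [gfun, vfun]
    · simp only [List.cons_append, gfun, vfun, if_neg h]
      exact ih n (chf α a)
/-! ### Rank computation in a grafted cone -/

theorem cone_acc {U : List ℕ → Bool} {r : List ℕ} {δ : Ordinal.{0}}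
    (Hc : ∀ u, r <+: u → (U u = true ↔ gfun (u.drop r.length) δ = true)) :
    ∀ (γ : Ordinal.{0}) (t : List ℕ), r <+: t → U t = true →
      vfun (t.drop r.length) δ = γ → Acc (childRel U) t := by
  intro γ
  induction γ using Ordinal.induction with
  | h γ ih =>
    intro t hrt hUt hv
    constructor
    rintro y ⟨hyU, n, rfl⟩
    have hL : r.length ≤ t.length := hrt.length_le
    have hdrop : (t ++ [n]).drop r.length = t.drop r.length ++ [n] :=
      List.drop_append_of_le_length hL
    have hrty : r <+: t ++ [n] := hrt.trans ⟨[n], rfl⟩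
    have hg : gfun ((t ++ [n]).drop r.length) δ = true := (Hc _ hrty).1 hyU
    rw [hdrop] at hg
    have hne : vfun (t.drop r.length) δ ≠ 0 := ((gfun_snoc _ _ _).1 hg).2
    have hlt : chf γ n < γ := by
      subst hv; exact chf_lt (pos_iff_ne_zero.2 hne) n
    refine ih (chf γ n) hlt (t ++ [n]) hrty hyU ?_
    rw [hdrop, vfun_snoc, hv]

theorem cone_rank {U : List ℕ → Bool} {r : List ℕ} {δ : Ordinal.{0}} (hδ : δ < ω₁)
    (Hc : ∀ u, r <+: u → (U u = true ↔ gfun (u.drop r.length) δ = true)) :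
    ∀ (γ : Ordinal.{0}) (t : List ℕ), r <+: t → U t = true →
      vfun (t.drop r.length) δ = γ → ∀ (ha : Acc (childRel U) t), ha.rank = γ := by
  intro γ
  induction γ using Ordinal.induction with
  | h γ ih =>
    intro t hrt hUt hv ha
    have hL : r.length ≤ t.length := hrt.length_le
    have hdrop : ∀ n : ℕ, (t ++ [n]).drop r.length = t.drop r.length ++ [n] :=
      fun n => List.drop_append_of_le_length hL
    rw [Acc.rank_eq]
    apply le_antisymm
    · refine Ordinal.iSup_le fun b => ?_
      obtain ⟨y, hy⟩ := b
      obtain ⟨hyU, n, rfl⟩ := id hy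
      have hrty : r <+: t ++ [n] := hrt.trans ⟨[n], rfl⟩
      have hg : gfun ((t ++ [n]).drop r.length) δ = true := (Hc _ hrty).1 hyU
      rw [hdrop n] at hg
      have hne : vfun (t.drop r.length) δ ≠ 0 := ((gfun_snoc _ _ _).1 hg).2
      have hlt : chf γ n < γ := by
        subst hv; exact chf_lt (pos_iff_ne_zero.2 hne) n
      have hrk : (ha.inv hy).rank = chf γ n := by
        refine ih (chf γ n) hlt (t ++ [n]) hrty hyU ?_ _
        rw [hdrop n, vfun_snoc, hv]
      rw [hrk]
      exact Order.succ_le_of_lt hlt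
    · refine le_of_forall_lt fun ξ hξ => ?_
      have hγ0 : γ ≠ 0 := fun h => by subst h; exact absurd hξ (not_lt_zero' (a := ξ))
      have hγω : γ < ω₁ := lt_of_le_of_lt (hv ▸ vfun_le (t.drop r.length) δ) hδ
      obtain ⟨n, hn⟩ := chf_surj (pos_iff_ne_zero.2 hγ0) hγω ξ hξ
      have hgt : gfun (t.drop r.length) δ = true := (Hc t hrt).1 hUt
      have hyU : U (t ++ [n]) = true := by
        rw [Hc _ (hrt.trans ⟨[n], rfl⟩), hdrop n]
        exact (gfun_snoc _ _ _).2 ⟨hgt, by rw [hv]; exact hγ0⟩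
      have hy : childRel U (t ++ [n]) t := ⟨hyU, n, rfl⟩
      have hrk : (ha.inv hy).rank = chf γ n := by
        refine ih (chf γ n) (hn ▸ hξ) (t ++ [n]) (hrt.trans ⟨[n], rfl⟩) hyU ?_ _
        rw [hdrop n, vfun_snoc, hv]
      have hle := Ordinal.le_iSup
        (fun b : {b // childRel U b t} => Order.succ (ha.inv b.2).rank) ⟨t ++ [n], hy⟩
      refine lt_of_lt_of_le ?_ hle
      simp only [hrk, hn]
      exact Order.lt_succ ξ
/-! ### An infinite branch through an ill-founded tree -/

noncomputable def br (U : List ℕ → Bool) (h : ¬ Acc (childRel U) []) :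
    ℕ → {s : List ℕ // ¬ Acc (childRel U) s}
  | 0 => ⟨[], h⟩
  | k + 1 => ⟨(chain_step (br U h k).2).choose,
      (chain_step (br U h k).2).choose_spec.2⟩

theorem br_child (U : List ℕ → Bool) (h : ¬ Acc (childRel U) []) (k : ℕ) :
    childRel U (br U h (k + 1)).1 (br U h k).1 :=
  (chain_step (br U h k).2).choose_spec.1

theorem br_nacc (U : List ℕ → Bool) (h : ¬ Acc (childRel U) []) (k : ℕ) :
    ¬ Acc (childRel U) (br U h k).1 := (br U h k).2

theorem br_length (U : List ℕ → Bool) (h : ¬ Acc (childRel U) []) :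
    ∀ k, (br U h k).1.length = k := by
  intro k
  induction k with
  | zero => rfl
  | succ k ih =>
    obtain ⟨_, n, hn⟩ := br_child U h k
    rw [hn, List.length_append, ih]
    rfl

theorem br_prefix (U : List ℕ → Bool) (h : ¬ Acc (childRel U) []) {j k : ℕ}
    (hjk : j ≤ k) : (br U h j).1 <+: (br U h k).1 := by
  induction k with
  | zero => rw [Nat.le_zero.1 hjk]
  | succ k ih =>
    rcases Nat.lt_or_ge j (k + 1) with hl | hl
    · obtain ⟨_, n, hn⟩ := br_child U h k
      exact (ih (Nat.lt_succ_iff.1 hl)).trans (by rw [hn]; exact ⟨[n], rfl⟩)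
    · rw [le_antisymm hjk hl]

theorem br_mem (U : List ℕ → Bool) (h : ¬ Acc (childRel U) []) (h0 : U [] = true)
    (k : ℕ) : U (br U h k).1 = true := by
  cases k with
  | zero => exact h0
  | succ k => exact (br_child U h k).1
/-! ### The grafting construction -/

theorem graft {β β' : Ordinal.{0}} (hβ : β < ω₁) (hβ' : β' < β)
    (T : TreeSpace) (hT : T ∈ Rset β) (hroot : ¬ Acc (childRel T.1) [])
    (hmem : T.1 [] = true) (q : Tagged) (hq : q.Finite)
    (hNq : ∀ x ∈ q, T.1 x.1 = true ∧ treeRank T x.1 = x.2) :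
    ∃ T' : TreeSpace, T' ∈ Rset β ∧
      (∀ x ∈ q, T'.1 x.1 = true ∧ treeRank T' x.1 = x.2) ∧ T' ∉ Rset β' := by
  classical
  have hβ'ω : β' < ω₁ := hβ'.trans hβ
  have hfin : ((fun x : List ℕ × WithTop Ordinal.{0} => x.1.length) '' q).Finite :=
    hq.image _
  obtain ⟨L0, hL0⟩ := hfin.bddAbove
  set L : ℕ := L0 + 1 with hLdef
  have hqlen : ∀ x ∈ q, x.1.length < L :=
    fun x hx => Nat.lt_succ_of_le (hL0 ⟨x, hx, rfl⟩)
  set b : ℕ → {s : List ℕ // ¬ Acc (childRel T.1) s} := br T.1 hroot with hbdef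
  set s : List ℕ := (b L).1 with hsdef
  have hslen : s.length = L := br_length T.1 hroot L
  obtain ⟨hmemL1, m, hm⟩ := br_child T.1 hroot L
  set r : List ℕ := s ++ [m + 1] with hrdef
  have hrlen : r.length = L + 1 := by rw [hrdef, List.length_append, hslen]; rfl
  have hbrne : ∀ j, ¬ r <+: (b j).1 := by
    intro j hpre
    have hjlen : (b j).1.length = j := br_length T.1 hroot j
    have hLj : L + 1 ≤ j := by
      have := hpre.length_le; rwa [hrlen, hjlen] at this
    have hb1 : (b (L + 1)).1 <+: (b j).1 := br_prefix T.1 hroot hLj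
    have hcmp : r <+: (b (L + 1)).1 := by
      refine List.prefix_of_prefix_length_le hpre hb1 ?_
      rw [hrlen, br_length T.1 hroot (L + 1)]
    have heq := hcmp.eq_of_length (by rw [hrlen, br_length T.1 hroot (L + 1)])
    rw [hm, hrdef] at heq
    simp at heq
  set V : List ℕ → Bool :=
    fun u => if r <+: u then gfun (u.drop (L + 1)) β' else T.1 u with hVdef
  have hVcone : ∀ u, r <+: u → V u = gfun (u.drop (L + 1)) β' :=
    fun u hu => if_pos hu
  have hVout : ∀ u, ¬ r <+: u → V u = T.1 u := fun u hu => if_neg hu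
  have hagree : ∀ t, ¬ r <+: t → ¬ t <+: r → ∀ u, t <+: u → V u = T.1 u := by
    intro t h1 h2 u hu
    refine hVout u fun hru => ?_
    rcases le_total t.length r.length with hl | hl
    · exact h2 (List.prefix_of_prefix_length_le hu hru hl)
    · exact h1 (List.prefix_of_prefix_length_le hru hu hl)
  have hsT : T.1 s = true := br_mem T.1 hroot hmem L
  have hpresT : ∀ t, t <+: s → T.1 t = true := fun t ht => T.2 s t ht hsT
  have hVtree : IsTreeFun V := by
    intro u t htu hVu
    by_cases hrt : r <+: t
    · have hru : r <+: u := hrt.trans htu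
      rw [hVcone t hrt]
      rw [hVcone u hru] at hVu
      obtain ⟨l, rfl⟩ := htu
      have hlt : L + 1 ≤ t.length := by
        have := hrt.length_le; rwa [hrlen] at this
      rw [List.drop_append_of_le_length hlt] at hVu
      exact gfun_prefix _ _ _ ⟨l, rfl⟩ hVu
    · rw [hVout t hrt]
      by_cases hru : r <+: u
      · have htr : t <+: r := by
          rcases le_total t.length r.length with hl | hl
          · exact List.prefix_of_prefix_length_le htu hru hl
          · exact absurd (List.prefix_of_prefix_length_le hru htu hl) hrt
        rcases prefix_snoc_iff.1 (hrdef ▸ htr) with hts | hteq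
        · exact hpresT t hts
        · rw [← hrdef] at hteq
          exact absurd (hteq ▸ List.prefix_refl r) hrt
      · rw [hVout u hru] at hVu
        exact T.2 u t htu hVu
  set T' : TreeSpace := ⟨V, hVtree⟩ with hT'def
  have hrV : V r = true := by
    rw [hVcone r (List.prefix_refl r)]
    have hd : r.drop (L + 1) = [] := by rw [← hrlen]; exact List.drop_length
    rw [hd]; rfl
  have hTfull : ∀ u n k, T.1 (u ++ [n]) = T.1 (u ++ [k]) := hT.1.2
  have hsnocT : ∀ k, T.1 (s ++ [k]) = true := by
    intro k
    rw [hTfull s k m, ← hm]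
    exact br_mem T.1 hroot hmem (L + 1)
  have hnotcone : ∀ (u : List ℕ) (k : ℕ), ¬ r <+: u → r ≠ u ++ [k] →
      V (u ++ [k]) = T.1 (u ++ [k]) := by
    intro u k h1 h2
    refine hVout _ fun hc => ?_
    rcases prefix_snoc_iff.1 hc with h | h
    · exact h1 h
    · exact h2 h
  have hueq : ∀ (u : List ℕ) (k : ℕ), r = u ++ [k] → u = s := by
    intro u k h
    rw [hrdef] at h
    exact (List.append_inj' h rfl).1.symm
  have hVfull : ∀ u n k, V (u ++ [n]) = V (u ++ [k]) := by
    intro u n k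
    by_cases hru : r <+: u
    · rw [hVcone _ (hru.trans ⟨[n], rfl⟩), hVcone _ (hru.trans ⟨[k], rfl⟩)]
      have hl : L + 1 ≤ u.length := by
        have := hru.length_le; rwa [hrlen] at this
      rw [List.drop_append_of_le_length hl, List.drop_append_of_le_length hl]
      have h1 := gfun_snoc (u.drop (L + 1)) n β'
      have h2 := gfun_snoc (u.drop (L + 1)) k β'
      cases hg : gfun (u.drop (L + 1) ++ [k]) β' with
      | true => exact h1.2 (h2.1 hg)
      | false =>
        cases hg' : gfun (u.drop (L + 1) ++ [n]) β' with
        | true => rw [← hg]; exact (h2.2 (h1.1 hg')).symm ▸ rfl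
        | false => rfl
    · by_cases h1 : r = u ++ [n] <;> by_cases h2 : r = u ++ [k]
      · rw [← h1, ← h2]
      · rw [← h1, hrV, hnotcone u k hru h2, hueq u n h1]
        exact (hsnocT k).symm
      · rw [← h2, hrV, hnotcone u n hru h1, hueq u k h2]
        exact hsnocT n
      · rw [hnotcone u n hru h1, hnotcone u k hru h2]
        exact hTfull u n k
  have hnilnc : ¬ r <+: ([] : List ℕ) := by
    intro h
    have := h.length_le
    rw [hrlen] at this
    simp at this
  have hV0 : V [] = true := by rw [hVout [] hnilnc]; exact hmem
  have Hc' : ∀ u, r <+: u → (V u = true ↔ gfun (u.drop r.length) β' = true) := by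
    intro u hu
    rw [hrlen, hVcone u hu]
  have hconeAcc : ∀ t, r <+: t → V t = true → Acc (childRel V) t :=
    fun t h1 h2 => cone_acc Hc' _ t h1 h2 rfl
  have hconeRank : ∀ t, r <+: t → V t = true →
      treeRank T' t = ((vfun (t.drop r.length) β' : Ordinal.{0}) : WithTop Ordinal.{0}) := by
    intro t h1 h2
    have ha : Acc (childRel T'.1) t := hconeAcc t h1 h2
    rw [treeRank_eq_rank ha, cone_rank hβ'ω Hc' _ t h1 h2 rfl ha]
  have hbV : ∀ k, V (b k).1 = true := fun k => by
    rw [hVout _ (hbrne k)]; exact br_mem T.1 hroot hmem k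
  have hbt : ∀ t, t <+: s → t = (b t.length).1 := by
    intro t hts
    have htlen : t.length ≤ L := by
      have := hts.length_le; rwa [hslen] at this
    have h1 : (b t.length).1 <+: s := br_prefix T.1 hroot htlen
    have h2 : t <+: (b t.length).1 :=
      List.prefix_of_prefix_length_le hts h1 (by rw [br_length T.1 hroot])
    exact h2.eq_of_length (by rw [br_length T.1 hroot])
  have hnaccV : ∀ t, t <+: s → ¬ Acc (childRel V) t := by
    intro t hts hacc
    refine no_chain hacc (fun k => (b (t.length + k)).1) ?_ fun k => ?_
    · simpa using (hbt t hts).symm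
    · exact ⟨hbV (t.length + k + 1), (br_child T.1 hroot (t.length + k)).2⟩
  have hnaccT : ∀ t, t <+: s → ¬ Acc (childRel T.1) t := by
    intro t hts
    rw [hbt t hts]
    exact br_nacc T.1 hroot t.length
  have hinc : ∀ t, ¬ r <+: t → ¬ t <+: r →
      V t = T.1 t ∧ treeRank T' t = treeRank T t := by
    intro t h1 h2
    have hag := hagree t h1 h2
    refine ⟨hag t (List.prefix_refl t), ?_⟩
    by_cases hacc : Acc (childRel T.1) t
    · have haccV : Acc (childRel V) t := acc_congr hacc fun u hu => (hag u hu).symm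
      rw [treeRank_eq_rank (show Acc (childRel T'.1) t from haccV), treeRank_eq_rank hacc]
      exact congrArg _ (rank_congr haccV (fun u hu => hag u hu) hacc)
    · have haccV : ¬ Acc (childRel V) t := fun h => hacc (acc_congr h hag)
      rw [treeRank_eq_top (show ¬ Acc (childRel T'.1) t from haccV), treeRank_eq_top hacc]
  have hprefr : ∀ u, u <+: r → u ≠ r → u <+: s := by
    intro u h1 h2
    rcases prefix_snoc_iff.1 (hrdef ▸ h1) with h | h
    · exact h
    · exact absurd (by rw [hrdef]; exact h) h2
  refine ⟨T', ⟨⟨hV0, hVfull⟩, ?_⟩, ?_, ?_⟩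
  · -- all ranks are ⊤ or < β
    intro u hVu
    by_cases hru : r <+: u
    · right
      rw [hconeRank u hru hVu]
      exact_mod_cast lt_of_le_of_lt (vfun_le (u.drop r.length) β') hβ'
    · by_cases hur : u <+: r
      · have hune : u ≠ r := fun h => hru (h ▸ List.prefix_refl r)
        left
        exact treeRank_eq_top (show ¬ Acc (childRel T'.1) u from
          hnaccV u (hprefr u hur hune))
      · have h := hinc u hru hur
        rw [h.2]
        have hTu : T.1 u = true := by rw [← h.1]; exact hVu
        exact hT.2 u hTu
  · -- q is preserved
    intro x hx
    have hxl : x.1.length < L := hqlen x hx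
    have h1 : ¬ r <+: x.1 := by
      intro h
      have := h.length_le
      rw [hrlen] at this
      omega
    by_cases h2 : x.1 <+: r
    · have hxr : x.1 ≠ r := by
        intro h
        rw [h, hrlen] at hxl
        omega
      have hxs : x.1 <+: s := hprefr x.1 h2 hxr
      refine ⟨by show V x.1 = true; rw [hVout _ h1]; exact (hNq x hx).1, ?_⟩
      have hTtop : treeRank T x.1 = ⊤ := treeRank_eq_top (hnaccT _ hxs)
      rw [treeRank_eq_top (show ¬ Acc (childRel T'.1) x.1 from hnaccV _ hxs),
        ← (hNq x hx).2, hTtop]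
    · have h := hinc x.1 h1 h2
      exact ⟨by show V x.1 = true; rw [h.1]; exact (hNq x hx).1,
        by rw [h.2]; exact (hNq x hx).2⟩
  · -- not in `Rset β'`
    intro hmem'
    have hrank : treeRank T' r = (β' : WithTop Ordinal.{0}) := by
      rw [hconeRank r (List.prefix_refl r) hrV]
      norm_cast
      rw [List.drop_length]
      rfl
    rcases hmem'.2 r hrV with h | h
    · rw [hrank] at h
      exact WithTop.coe_ne_top h
    · rw [hrank] at h
      exact absurd (WithTop.coe_lt_coe.1 h) (lt_irrefl β')
/-! ### Finite tagged subtrees of the rank function -/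

theorem subgraph_Pfin {β : Ordinal.{0}} {T : TreeSpace} (hT : T ∈ Rset β)
    {c : Tagged} (hfin : c.Finite)
    (hgr : ∀ x ∈ c, T.1 x.1 = true ∧ treeRank T x.1 = x.2)
    (hdom : ∀ s t : List ℕ, t <+: s → s ∈ c.dom → t ∈ c.dom) :
    c ∈ Pfin β := by
  refine ⟨hfin, ⟨?_, hdom, ?_⟩, ?_⟩
  · intro s h h' h1 h2
    exact ((hgr _ h1).2.symm.trans (hgr _ h2).2)
  · intro s h t h' hs ht hts hne
    have hTs := (hgr _ hs).1
    have hrs := (hgr _ hs).2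
    have hrt := (hgr _ ht).2
    dsimp only at hTs hrs hrt
    by_cases hacc : Acc (childRel T.1) t
    · right
      obtain ⟨l, rfl⟩ := hts
      have hl : l ≠ [] := by rintro rfl; exact hne (by simp)
      have haccs : Acc (childRel T.1) (t ++ l) := acc_of_prefix T.2 l t hTs hacc
      have hlt := rank_lt_of_proper_prefix T.2 l t hl hTs hacc haccs
      rw [← hrs, ← hrt, treeRank_eq_rank haccs, treeRank_eq_rank hacc]
      exact_mod_cast hlt
    · left
      rw [← hrt, treeRank_eq_top hacc]
  · intro x hx
    rw [← (hgr x hx).2]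
    exact hT.2 x.1 (hgr x hx).1

theorem union_Pfin {β : Ordinal.{0}} {T : TreeSpace} {p q : Tagged}
    (hp : p ∈ Pfin β) (hq : q ∈ Pfin β) (hTp : T ∈ Nset β p) (hTq : T ∈ Nset β q) :
    p ∪ q ∈ Pfin β ∧ T ∈ Nset β (p ∪ q) ∧
      ∀ T'' : TreeSpace, T'' ∈ Nset β (p ∪ q) → T'' ∈ Nset β p ∧ T'' ∈ Nset β q := by
  have hT : T ∈ Rset β := hTp.1
  have hgr : ∀ x ∈ p ∪ q, T.1 x.1 = true ∧ treeRank T x.1 = x.2 := by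
    rintro x (hx | hx)
    exacts [hTp.2 x hx, hTq.2 x hx]
  have hdom : ∀ s t : List ℕ, t <+: s → s ∈ (p ∪ q).dom → t ∈ (p ∪ q).dom := by
    intro s t hts hs
    rw [Tagged.dom, Set.image_union] at hs ⊢
    rcases hs with h | h
    · exact Or.inl (hp.2.1.2.1 s t hts h)
    · exact Or.inr (hq.2.1.2.1 s t hts h)
  refine ⟨subgraph_Pfin hT (hp.1.union hq.1) hgr hdom, ⟨hT, hgr⟩, ?_⟩
  intro T'' h
  exact ⟨⟨h.1, fun x hx => h.2 x (Or.inl hx)⟩, ⟨h.1, fun x hx => h.2 x (Or.inr hx)⟩⟩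

theorem empty_Pfin (β : Ordinal.{0}) : (∅ : Tagged) ∈ Pfin β := by
  refine ⟨Set.finite_empty, ⟨?_, ?_, ?_⟩, ?_⟩
  · rintro s h h' ⟨⟩
  · intro s t _ hs
    simp [Tagged.dom] at hs
  · rintro s h t h' ⟨⟩
  · rintro x ⟨⟩

theorem pZero_Pfin (β : Ordinal.{0}) : pZero ∈ Pfin β := by
  refine ⟨Set.finite_singleton _, ⟨?_, ?_, ?_⟩, ?_⟩
  · intro s h h' hs hs'
    simp only [pZero, Set.mem_singleton_iff, Prod.mk.injEq] at hs hs'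
    rw [hs.2, hs'.2]
  · intro s t hts hs
    simp only [Tagged.dom, pZero, Set.image_singleton, Set.mem_singleton_iff] at hs ⊢
    subst hs
    exact List.prefix_nil.1 hts
  · intro s h t h' hs ht hts hne
    simp only [pZero, Set.mem_singleton_iff, Prod.mk.injEq] at hs ht
    exact absurd (ht.1.trans hs.1.symm) hne
  · rintro x hx
    simp only [pZero, Set.mem_singleton_iff] at hx
    subst hx
    exact Or.inl rfl

/-! ### The basic sets form a topological basis -/

theorem basis_beta (β : Ordinal.{0}) :
    @TopologicalSpace.IsTopologicalBasis ↥(Rset β) (betaTop β)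
      {U : Set ↥(Rset β) | ∃ p ∈ Pfin β, U = {T : ↥(Rset β) | (T : TreeSpace) ∈ Nset β p}} := by
  letI : TopologicalSpace ↥(Rset β) := betaTop β
  refine ⟨?_, ?_, rfl⟩
  · rintro t1 ⟨p1, hp1, rfl⟩ t2 ⟨p2, hp2, rfl⟩ x ⟨hx1, hx2⟩
    obtain ⟨hup, hTu, hsub⟩ := union_Pfin hp1 hp2 hx1 hx2
    refine ⟨_, ⟨p1 ∪ p2, hup, rfl⟩, hTu, ?_⟩
    intro y hy
    exact hsub _ hy
  · apply Set.eq_univ_of_forall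
    intro x
    exact ⟨_, ⟨∅, empty_Pfin β, rfl⟩,
      ⟨x.2, fun y hy => absurd hy (Set.notMem_empty y)⟩⟩

/-! ### The complement of `Rset β'` is open -/

theorem open_notR {β β' : Ordinal.{0}} (_hβ' : β' < β) :
    @IsOpen ↥(Rset β) (betaTop β) {x : ↥(Rset β) | (x : TreeSpace) ∉ Rset β'} := by
  letI : TopologicalSpace ↥(Rset β) := betaTop β
  have heq : {x : ↥(Rset β) | (x : TreeSpace) ∉ Rset β'} =
      ⋃ p ∈ {p : Tagged | p ∈ Pfin β ∧
        ∃ y ∈ p, y.2 ≠ ⊤ ∧ ((β' : WithTop Ordinal.{0}) ≤ y.2)},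
        {T : ↥(Rset β) | (T : TreeSpace) ∈ Nset β p} := by
    ext x
    simp only [Set.mem_setOf_eq, Set.mem_iUnion, exists_prop]
    constructor
    · intro hx
      have hxβ : (x : TreeSpace) ∈ Rset β := x.2
      have hG : (x : TreeSpace) ∈ GTreeSet := hxβ.1
      have hex : ∃ s : List ℕ, (x : TreeSpace).1 s = true ∧
          ¬(treeRank ↑x s = ⊤ ∨ treeRank ↑x s < (β' : WithTop Ordinal.{0})) := by
        by_contra hc
        push_neg at hc
        exact hx ⟨hG, fun s hs => hc s hs⟩
      obtain ⟨s, hs, hns⟩ := hex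
      push_neg at hns
      set c : Tagged := (fun t => (t, treeRank ↑x t)) '' {t | t <+: s} with hcdef
      have hfin : c.Finite := by
        refine Set.Finite.image _ (Set.Finite.subset (s.inits.finite_toSet) ?_)
        intro t ht
        simpa [List.mem_inits] using ht
      have hgr : ∀ y ∈ c, (x : TreeSpace).1 y.1 = true ∧ treeRank ↑x y.1 = y.2 := by
        rintro y ⟨t, ht, rfl⟩
        exact ⟨(x : TreeSpace).2 s t ht hs, rfl⟩
      have hdom : ∀ u t : List ℕ, t <+: u → u ∈ c.dom → t ∈ c.dom := by
        intro u t htu hu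
        obtain ⟨y, ⟨t0, ht0, rfl⟩, rfl⟩ := hu
        exact ⟨(t, treeRank ↑x t), ⟨t, htu.trans ht0, rfl⟩, rfl⟩
      refine ⟨c, ⟨subgraph_Pfin hxβ hfin hgr hdom,
        ⟨(s, treeRank ↑x s), ⟨s, List.prefix_refl s, rfl⟩, hns.1, hns.2⟩⟩,
        hxβ, ?_⟩
      rintro y ⟨t, ht, rfl⟩
      exact ⟨(x : TreeSpace).2 s t ht hs, rfl⟩
    · rintro ⟨p, ⟨hp, y, hy, hyne, hyge⟩, hxp⟩ hmem'
      have hfact := hxp.2 y hy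
      rcases hmem'.2 y.1 hfact.1 with h | h
      · exact hyne (hfact.2 ▸ h)
      · rw [hfact.2] at h
        exact absurd (lt_of_le_of_lt hyge h) (lt_irrefl _)
  rw [heq]
  exact isOpen_biUnion fun p hp => TopologicalSpace.GenerateOpen.basic _ ⟨p, hp.1, rfl⟩
theorem statement_14 (β : Ordinal.{0}) (hβ : β < ω₁) :
    (∀ β' : Ordinal.{0}, β' < β →
      @IsOpen (↥{T : ↥(Rset β) | (T : TreeSpace) ∈ Nset β pZero})
          (TopologicalSpace.induced Subtype.val (betaTop β))
          {x : ↥{T : ↥(Rset β) | (T : TreeSpace) ∈ Nset β pZero} |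
            ((x : ↥(Rset β)) : TreeSpace) ∉ Rset β'} ∧
      @Dense (↥{T : ↥(Rset β) | (T : TreeSpace) ∈ Nset β pZero})
          (TopologicalSpace.induced Subtype.val (betaTop β))
          {x : ↥{T : ↥(Rset β) | (T : TreeSpace) ∈ Nset β pZero} |
            ((x : ↥(Rset β)) : TreeSpace) ∉ Rset β'}) ∧
    Forces β pZero (Rset β \ ⋃ β' ∈ Set.Iio β, Rset β') := by
  classical
  letI tβ : TopologicalSpace ↥(Rset β) := betaTop β
  letI tX : TopologicalSpace ↥{T : ↥(Rset β) | (T : TreeSpace) ∈ Nset β pZero} :=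
    TopologicalSpace.induced Subtype.val (betaTop β)
  have hbX : @TopologicalSpace.IsTopologicalBasis
      ↥{T : ↥(Rset β) | (T : TreeSpace) ∈ Nset β pZero}
      (TopologicalSpace.induced Subtype.val (betaTop β))
      ((Set.preimage (Subtype.val :
          ↥{T : ↥(Rset β) | (T : TreeSpace) ∈ Nset β pZero} → ↥(Rset β))) ''
        {U : Set ↥(Rset β) | ∃ p ∈ Pfin β,
          U = {T : ↥(Rset β) | (T : TreeSpace) ∈ Nset β p}}) :=
    TopologicalSpace.IsTopologicalBasis.induced Subtype.val (basis_beta β)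
  have hOpen : ∀ β' : Ordinal.{0}, β' < β →
      @IsOpen (↥{T : ↥(Rset β) | (T : TreeSpace) ∈ Nset β pZero})
        (TopologicalSpace.induced Subtype.val (betaTop β))
        {x : ↥{T : ↥(Rset β) | (T : TreeSpace) ∈ Nset β pZero} |
          ((x : ↥(Rset β)) : TreeSpace) ∉ Rset β'} := by
    intro β' hβ'
    exact isOpen_induced (open_notR hβ')
  have hDense : ∀ β' : Ordinal.{0}, β' < β →
      @Dense (↥{T : ↥(Rset β) | (T : TreeSpace) ∈ Nset β pZero})
        (TopologicalSpace.induced Subtype.val (betaTop β))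
        {x : ↥{T : ↥(Rset β) | (T : TreeSpace) ∈ Nset β pZero} |
          ((x : ↥(Rset β)) : TreeSpace) ∉ Rset β'} := by
    intro β' hβ'
    refine hbX.dense_iff.2 ?_
    rintro o ⟨U, ⟨p, hp, rfl⟩, rfl⟩ ⟨x, hx⟩
    have hTp : ((x : ↥(Rset β)) : TreeSpace) ∈ Nset β p := hx
    have hTz : ((x : ↥(Rset β)) : TreeSpace) ∈ Nset β pZero := x.2
    obtain ⟨hup, hTu, hsub⟩ := union_Pfin hp (pZero_Pfin β) hTp hTz
    have hz := hTz.2 ([], ⊤) rfl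
    have hroot : ¬ Acc (childRel ((x : ↥(Rset β)) : TreeSpace).1) [] :=
      treeRank_eq_top_iff.1 hz.2
    obtain ⟨T', hT'β, hT'q, hT'not⟩ :=
      graft hβ hβ' _ hTp.1 hroot hz.1 (p ∪ pZero) hup.1 hTu.2
    have hT'p : T' ∈ Nset β p := ⟨hT'β, fun y hy => hT'q y (Or.inl hy)⟩
    have hT'z : T' ∈ Nset β pZero := ⟨hT'β, fun y hy => hT'q y (Or.inr hy)⟩
    exact ⟨⟨⟨T', hT'β⟩, hT'z⟩, hT'p, hT'not⟩
  refine ⟨fun β' hβ' => ⟨hOpen β' hβ', hDense β' hβ'⟩, ?_⟩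
  have heq : {x : ↥{T : ↥(Rset β) | (T : TreeSpace) ∈ Nset β pZero} |
        ((x : ↥(Rset β)) : TreeSpace) ∈ (Rset β \ ⋃ β' ∈ Set.Iio β, Rset β')} =
      ⋂ β' ∈ Set.Iio β, {x : ↥{T : ↥(Rset β) | (T : TreeSpace) ∈ Nset β pZero} |
        ((x : ↥(Rset β)) : TreeSpace) ∉ Rset β'} := by
    ext x
    simp only [Set.mem_diff, Set.mem_iUnion, Set.mem_setOf_eq, Set.mem_iInter,
      Set.mem_Iio, exists_prop, not_exists, not_and]
    constructor
    · intro h β' hb'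
      exact h.2 β' hb'
    · intro h
      exact ⟨x.1.2, h⟩
  have hres : (⋂ β' ∈ Set.Iio β, {x : ↥{T : ↥(Rset β) | (T : TreeSpace) ∈ Nset β pZero} |
        ((x : ↥(Rset β)) : TreeSpace) ∉ Rset β'}) ∈
      @residual ↥{T : ↥(Rset β) | (T : TreeSpace) ∈ Nset β pZero}
        (TopologicalSpace.induced Subtype.val (betaTop β)) :=
    (countable_bInter_mem (countable_Iio_of_lt_omega1 hβ)).2
      fun β' hβ' => residual_of_dense_open (hOpen β' hβ') (hDense β' hβ')
  show {x : ↥{T : ↥(Rset β) | (T : TreeSpace) ∈ Nset β pZero} |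
      ((x : ↥(Rset β)) : TreeSpace) ∈ (Rset β \ ⋃ β' ∈ Set.Iio β, Rset β')} ∈
    @residual ↥{T : ↥(Rset β) | (T : TreeSpace) ∈ Nset β pZero}
      (TopologicalSpace.induced Subtype.val (betaTop β))
  rw [heq]
  exact hres
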